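/- arXiv:1812.03766 — 7 statements merged into one kernel-verified Lean document; each statement's English description precedes it below -/
import Mathlib

section
/- Let C be a bivariate extreme value copula with upper tail dependence coefficient λ ∈ [0,1]. Then for all u, v ∈ [0,1], C(u,v) ≥ min{u^(1-λ) · v, u · v^(1-λ)} (i.e., C is bounded below pointwise by the Marshall–Olkin copula with both parameters equal to λ). -/
open MeasureTheory Filter Set Real

noncomputable section

/-- A bivariate copula: boundary conditions and the 2-increasing property. -/
def IsCopula (C : ℝ → ℝ → ℝ) : Prop :=
  (∀ u : ℝ, 0 ≤ u → u ≤ 1 → C u 0 = 0 ∧ C 0 u = 0 ∧ C u 1 = u ∧ C 1 u = u) ∧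
  (∀ u₁ u₂ v₁ v₂ : ℝ, 0 ≤ u₁ → u₁ ≤ u₂ → u₂ ≤ 1 → 0 ≤ v₁ → v₁ ≤ v₂ → v₂ ≤ 1 →
    0 ≤ C u₂ v₂ - C u₂ v₁ - C u₁ v₂ + C u₁ v₁)

/-- An extreme value copula: a copula satisfying the max-stability identity. -/
def IsExtremeValueCopula (C : ℝ → ℝ → ℝ) : Prop :=
  IsCopula C ∧ ∀ s : ℝ, 0 < s → ∀ u v : ℝ, 0 ≤ u → u ≤ 1 → 0 ≤ v → v ≤ 1 →
    C (u ^ s) (v ^ s) = C u v ^ s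

/-- `C` has upper tail dependence coefficient `lam`,
i.e. `lam = 2 - lim_{t → 1⁻} (1 - C t t)/(1 - t)`. -/
def HasUpperTailDep (C : ℝ → ℝ → ℝ) (lam : ℝ) : Prop :=
  Tendsto (fun t : ℝ => (1 - C t t) / (1 - t)) (nhdsWithin 1 (Set.Iio 1))
    (nhds (2 - lam))

open Topology

/-! For `0 < u ≤ v ≤ 1` and `h > 0`, the 2-increasing property on `[u^h, v^h] × [v^h, 1]` gives
`C(u^h, v^h) ≥ g(h) := C(v^h, v^h) + u^h - v^h`, and max-stability turns this into
`C(u, v) = C(u^h, v^h)^(1/h) ≥ g(h)^(1/h)`. Now `g(0) = 1`, and `2 - λ` is the left derivative of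
the diagonal `t ↦ C(t, t)` at `1`, so `g'(0⁺) = log u + (1 - λ) log v`.
Letting `h → 0⁺` gives `C(u, v) ≥ exp(g'(0⁺)) = u v^(1-λ)`; the case `v ≤ u` is symmetric. -/

theorem tendsto_rpow_inv_nhdsGT_zero_of_hasDerivWithinAt {g : ℝ → ℝ} {L : ℝ}
    (hg : HasDerivWithinAt g L (Ici 0) 0) (hg0 : g 0 = 1) :
    Tendsto (fun h => g h ^ h⁻¹) (𝓝[>] 0) (𝓝 (exp L)) := by
  have hlog : HasDerivWithinAt (fun h => log (g h)) L (Ici 0) 0 := by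
    simpa [hg0] using hg.log (by simp [hg0])
  have hslope := hasDerivWithinAt_iff_tendsto_slope.mp hlog
  rw [Ici_sdiff_left] at hslope
  have hpos : ∀ᶠ h in 𝓝[>] 0, 0 < g h :=
    (hg0 ▸ (hg.continuousWithinAt.mono Ioi_subset_Ici_self).tendsto).eventually_const_lt one_pos
  refine ((continuous_exp.tendsto L).comp hslope).congr' ?_
  filter_upwards [hpos] with h hh
  simp [slope_def_field, hg0, rpow_def_of_pos hh, div_eq_mul_inv]

namespace IsCopula

variable {C : ℝ → ℝ → ℝ}

theorem apply_one_one (hC : IsCopula C) : C 1 1 = 1 :=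
  (hC.1 1 zero_le_one le_rfl).2.2.1

theorem diag_add_sub_le (hC : IsCopula C) {p q : ℝ} (hp : 0 ≤ p) (hpq : p ≤ q) (hq : q ≤ 1) :
    C q q + p - q ≤ C p q := by
  have hp₁ := (hC.1 p hp (hpq.trans hq)).2.2.1
  have hq₁ := (hC.1 q (hp.trans hpq) hq).2.2.1
  linarith [hC.2 p q q 1 hp hpq hq (hp.trans hpq) hq le_rfl]

theorem swap (hC : IsCopula C) : IsCopula (fun u v => C v u) := by
  refine ⟨fun u hu₀ hu₁ => ?_, fun u₁ u₂ v₁ v₂ hu₁ hu hu₂ hv₁ hv hv₂ => ?_⟩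
  · obtain ⟨h₁, h₂, h₃, h₄⟩ := hC.1 u hu₀ hu₁
    exact ⟨h₂, h₁, h₄, h₃⟩
  · linarith [hC.2 v₁ v₂ u₁ u₂ hv₁ hv hv₂ hu₁ hu hu₂]

end IsCopula

theorem IsExtremeValueCopula.swap {C : ℝ → ℝ → ℝ} (hC : IsExtremeValueCopula C) :
    IsExtremeValueCopula (fun u v => C v u) :=
  ⟨hC.1.swap, fun s hs u v hu₀ hu₁ hv₀ hv₁ => hC.2 s hs v u hv₀ hv₁ hu₀ hu₁⟩

theorem HasUpperTailDep.hasDerivWithinAt_diag {C : ℝ → ℝ → ℝ} {lam : ℝ}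
    (hU : HasUpperTailDep C lam) (h11 : C 1 1 = 1) :
    HasDerivWithinAt (fun t => C t t) (2 - lam) (Iic 1) 1 := by
  rw [hasDerivWithinAt_iff_tendsto_slope, Iic_sdiff_right]
  refine hU.congr' (eventually_nhdsWithin_of_forall fun t (ht : t < 1) => ?_)
  rw [slope_def_field, h11, ← neg_sub 1 (C t t), ← neg_sub 1 t, neg_div_neg_eq]

theorem IsExtremeValueCopula.rpow_inv_le {C : ℝ → ℝ → ℝ} (hC : IsExtremeValueCopula C)
    {u v h : ℝ} (hu : 0 ≤ u) (huv : u ≤ v) (hv : v ≤ 1) (hh : 0 < h)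
    (hg : 0 ≤ C (v ^ h) (v ^ h) + u ^ h - v ^ h) :
    (C (v ^ h) (v ^ h) + u ^ h - v ^ h) ^ h⁻¹ ≤ C u v := by
  have hv₀ : 0 ≤ v := hu.trans huv
  have hmax := hC.2 h⁻¹ (inv_pos.2 hh) (u ^ h) (v ^ h) (rpow_nonneg hu h)
    (rpow_le_one hu (huv.trans hv) hh.le) (rpow_nonneg hv₀ h) (rpow_le_one hv₀ hv hh.le)
  rw [rpow_rpow_inv hu hh.ne', rpow_rpow_inv hv₀ hh.ne'] at hmax
  rw [hmax]
  exact rpow_le_rpow hg (hC.1.diag_add_sub_le (rpow_nonneg hu h)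
    (rpow_le_rpow hu huv hh.le) (rpow_le_one hv₀ hv hh.le)) (inv_nonneg.2 hh.le)

theorem IsExtremeValueCopula.mul_rpow_one_sub_le {C : ℝ → ℝ → ℝ} {lam : ℝ}
    (hC : IsExtremeValueCopula C) (hU : HasUpperTailDep C lam)
    {u v : ℝ} (hu : 0 ≤ u) (huv : u ≤ v) (hv : v ≤ 1) :
    u * v ^ (1 - lam) ≤ C u v := by
  rcases hu.eq_or_lt with rfl | hu
  · simp [(hC.1.1 v huv hv).2.1]
  have hv₀ : 0 < v := hu.trans_le huv
  set g : ℝ → ℝ := fun h => C (v ^ h) (v ^ h) + u ^ h - v ^ h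
  have hpow : ∀ {a : ℝ}, 0 < a → HasDerivAt (fun h : ℝ => a ^ h) (log a) 0 := fun ha => by
    simpa using (hasStrictDerivAt_const_rpow ha 0).hasDerivAt
  have hdiag : HasDerivWithinAt (fun h : ℝ => C (v ^ h) (v ^ h)) (log v * (2 - lam)) (Ici 0) 0 :=
    (hU.hasDerivWithinAt_diag hC.1.apply_one_one).scomp_of_eq 0 (hpow hv₀).hasDerivWithinAt
      (fun h (hh : 0 ≤ h) => mem_Iic.2 (rpow_le_one hv₀.le hv hh)) (rpow_zero v).symm
  have hg : HasDerivWithinAt g (log u + log v * (1 - lam)) (Ici 0) 0 :=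
    ((hdiag.add (hpow hu).hasDerivWithinAt).sub (hpow hv₀).hasDerivWithinAt).congr_deriv
      (by ring)
  have hg0 : g 0 = 1 := by simp [g, hC.1.apply_one_one]
  have hlim := tendsto_rpow_inv_nhdsGT_zero_of_hasDerivWithinAt hg hg0
  rw [exp_add, exp_log hu, ← rpow_def_of_pos hv₀] at hlim
  have hpos : ∀ᶠ h in 𝓝[>] 0, 0 < g h :=
    (hg0 ▸ (hg.continuousWithinAt.mono Ioi_subset_Ici_self).tendsto).eventually_const_lt one_pos
  refine le_of_tendsto hlim ?_
  filter_upwards [self_mem_nhdsWithin, hpos] with h (hh : 0 < h) hgh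
  exact hC.rpow_inv_le hu.le huv hv hh hgh.le

theorem stmt_0_general (C : ℝ → ℝ → ℝ) (lam : ℝ)
    (hC : IsExtremeValueCopula C) (hU : HasUpperTailDep C lam) :
    ∀ u v : ℝ, u ∈ Set.Icc (0:ℝ) 1 → v ∈ Set.Icc (0:ℝ) 1 →
      min (u ^ (1 - lam) * v) (u * v ^ (1 - lam)) ≤ C u v := by
  rintro u v ⟨hu₀, hu₁⟩ ⟨hv₀, hv₁⟩
  rcases le_total u v with huv | hvu
  · exact (min_le_right _ _).trans (hC.mul_rpow_one_sub_le hU hu₀ huv hv₁)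
  · rw [mul_comm]
    exact (min_le_left _ _).trans (hC.swap.mul_rpow_one_sub_le hU hv₀ hvu hu₁)

theorem stmt_0 (C : ℝ → ℝ → ℝ) (lam : ℝ) (hlam : lam ∈ Set.Icc (0:ℝ) 1)
    (hC : IsExtremeValueCopula C) (hU : HasUpperTailDep C lam) :
    ∀ u v : ℝ, u ∈ Set.Icc (0:ℝ) 1 → v ∈ Set.Icc (0:ℝ) 1 →
      min (u ^ (1 - lam) * v) (u * v ^ (1 - lam)) ≤ C u v :=
  stmt_0_general C lam hC hU
end
end

section
/- Let C be a bivariate extreme value copula with upper tail dependence coefficient λ ∈ [0,1]. Then there exist real numbers a, b ≥ 0 with a + b = λ such that for all u, v ∈ [0,1], C(u,v) ≤ min{u, v, u^(1-a) · v^(1-b)}. -/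
open MeasureTheory Filter Set Real

noncomputable section

/-!
Write `C u v = exp (-ℓ (-log u) (-log v))`. Max-stability makes `ℓ` positively homogeneous, and the
2-increasing property, applied at `(u ^ s, v ^ s)` and differentiated at `s = 0`, makes `ℓ`
submodular and `1`-Lipschitz. For a homogeneous function submodularity is convexity of
`ψ = ℓ (·, 1)`: dilations increase its a.e. derivative. So `ψ` has a supporting line of some slope
`α ∈ [0, 1]` at `1`, that is `ℓ x y ≥ α x + (θ - α) y` with `θ = ψ 1`. Since `C t t = t ^ θ`,
`θ = 2 - λ`, and the bound follows with `a = 1 - α`, `b = 1 - θ + α`; `b ≥ 0` is the supporting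
line at `0`, where `ψ 0 = 1`.
-/

open Topology

namespace IsCopula

variable {C : ℝ → ℝ → ℝ} {u u' v : ℝ}

lemma nonneg (hC : IsCopula C) (hu : 0 ≤ u) (hu1 : u ≤ 1) (hv : 0 ≤ v) (hv1 : v ≤ 1) :
    0 ≤ C u v := by
  have := hC.2 0 u 0 v le_rfl hu hu1 le_rfl hv hv1
  linarith [(hC.1 0 le_rfl zero_le_one).1, (hC.1 u hu hu1).1, (hC.1 v hv hv1).2.1]

lemma le_left (hC : IsCopula C) (hu : 0 ≤ u) (hu1 : u ≤ 1) (hv : 0 ≤ v) (hv1 : v ≤ 1) :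
    C u v ≤ u := by
  have := hC.2 0 u v 1 le_rfl hu hu1 hv hv1 le_rfl
  linarith [(hC.1 u hu hu1).2.2.1, (hC.1 1 zero_le_one le_rfl).2.1, (hC.1 v hv hv1).2.1]

lemma le_right (hC : IsCopula C) (hu : 0 ≤ u) (hu1 : u ≤ 1) (hv : 0 ≤ v) (hv1 : v ≤ 1) :
    C u v ≤ v := by
  have := hC.2 u 1 0 v hu hu1 le_rfl le_rfl hv hv1
  linarith [(hC.1 v hv hv1).2.2.2, (hC.1 1 zero_le_one le_rfl).1, (hC.1 u hu hu1).1]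

lemma add_sub_one_le (hC : IsCopula C) (hu : 0 ≤ u) (hu1 : u ≤ 1) (hv : 0 ≤ v) (hv1 : v ≤ 1) :
    u + v - 1 ≤ C u v := by
  have := hC.2 u 1 v 1 hu hu1 le_rfl hv hv1 le_rfl
  linarith [(hC.1 1 zero_le_one le_rfl).2.2.1, (hC.1 v hv hv1).2.2.2, (hC.1 u hu hu1).2.2.1]

lemma mono_left (hC : IsCopula C) (hu : 0 ≤ u) (huu' : u ≤ u') (hu' : u' ≤ 1) (hv : 0 ≤ v)
    (hv1 : v ≤ 1) : C u v ≤ C u' v := by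
  have := hC.2 u u' 0 v hu huu' hu' le_rfl hv hv1
  linarith [(hC.1 u hu (huu'.trans hu')).1, (hC.1 u' (hu.trans huu') hu').1]

lemma sub_le_sub_of_le_left (hC : IsCopula C) (hu : 0 ≤ u) (huu' : u ≤ u') (hu' : u' ≤ 1)
    (hv : 0 ≤ v) (hv1 : v ≤ 1) : C u' v - C u v ≤ u' - u := by
  have := hC.2 u u' v 1 hu huu' hu' hv hv1 le_rfl
  linarith [(hC.1 u hu (huu'.trans hu')).2.2.1, (hC.1 u' (hu.trans huu') hu').2.2.1]

end IsCopula

lemma HasDerivAt.nonneg_of_forall_lt_le {φ : ℝ → ℝ} {d a : ℝ} (hd : HasDerivAt φ d a)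
    (h : ∀ s, a < s → φ a ≤ φ s) : 0 ≤ d := by
  have hslope := (hasDerivWithinAt_iff_tendsto_slope' (s := Ioi a) (lt_irrefl a)).1
    hd.hasDerivWithinAt
  refine ge_of_tendsto hslope ?_
  filter_upwards [self_mem_nhdsWithin] with s (hs : a < s)
  rw [slope_def_field]
  exact div_nonneg (sub_nonneg.2 (h s hs)) (sub_nonneg.2 hs.le)

/-- Differentiating at `s = 0`. -/
lemma add_le_add_of_forall_exp_neg_mul {a b c d : ℝ}
    (h : ∀ s, 0 < s → exp (-(s * a)) + exp (-(s * b)) ≤ exp (-(s * c)) + exp (-(s * d))) :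
    c + d ≤ a + b := by
  have hexp (k : ℝ) : HasDerivAt (fun s => exp (-(s * k))) (-k) 0 := by
    simpa using ((hasDerivAt_mul_const k (x := 0)).neg).exp
  have := HasDerivAt.nonneg_of_forall_lt_le (((hexp c).add (hexp d)).sub ((hexp a).add (hexp b)))
    (fun s hs => by simpa using h s hs)
  linarith

lemma LipschitzWith.mul_sub_le_sub_of_ae_le_deriv {f : ℝ → ℝ} {K : NNReal}
    (hf : LipschitzWith K f) {a b c : ℝ} (hab : a ≤ b)
    (h : ∀ᵐ x, x ∈ Ioc a b → c ≤ deriv f x) : c * (b - a) ≤ f b - f a := by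
  have hac := (hf.lipschitzOnWith (s := uIcc a b)).absolutelyContinuousOnInterval
  rw [← hac.integral_deriv_eq_sub, mul_comm, ← smul_eq_mul, ← intervalIntegral.integral_const]
  refine intervalIntegral.integral_mono_ae_restrict hab intervalIntegrable_const
    hac.intervalIntegrable_deriv ?_
  rwa [EventuallyLE, ← Measure.restrict_congr_set Ioc_ae_eq_Icc, ae_restrict_iff' measurableSet_Ioc]

lemma LipschitzWith.sub_le_mul_sub_of_ae_deriv_le {f : ℝ → ℝ} {K : NNReal}
    (hf : LipschitzWith K f) {a b c : ℝ} (hab : a ≤ b)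
    (h : ∀ᵐ x, x ∈ Ioc a b → deriv f x ≤ c) : f b - f a ≤ c * (b - a) := by
  have hac := (hf.lipschitzOnWith (s := uIcc a b)).absolutelyContinuousOnInterval
  rw [← hac.integral_deriv_eq_sub, mul_comm, ← smul_eq_mul, ← intervalIntegral.integral_const]
  refine intervalIntegral.integral_mono_ae_restrict hab hac.intervalIntegrable_deriv
    intervalIntegrable_const ?_
  rwa [EventuallyLE, ← Measure.restrict_congr_set Ioc_ae_eq_Icc, ae_restrict_iff' measurableSet_Ioc]

lemma exp_neg_le_one {x : ℝ} (hx : 0 ≤ x) : exp (-x) ≤ 1 :=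
  exp_le_one_iff.2 (neg_nonpos.2 hx)

/-- The stable tail dependence function `ℓ`, so that `C u v = exp (-ℓ (-log u) (-log v))`. -/
def stableTailDep (C : ℝ → ℝ → ℝ) (x y : ℝ) : ℝ := -log (C (exp (-x)) (exp (-y)))

/-- `stableTailDep C · 1`, extended to negative arguments by its value at `0` so that it is
monotone and `1`-Lipschitz on all of `ℝ`. By homogeneity it determines `stableTailDep C`. -/
def tailProfile (C : ℝ → ℝ → ℝ) (z : ℝ) : ℝ := stableTailDep C (max z 0) 1

lemma tailProfile_of_nonneg {C : ℝ → ℝ → ℝ} {z : ℝ} (hz : 0 ≤ z) :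
    tailProfile C z = stableTailDep C z 1 := by
  rw [tailProfile, max_eq_left hz]

namespace IsExtremeValueCopula

variable {C : ℝ → ℝ → ℝ} {u v x x' y : ℝ}

lemma pos (hE : IsExtremeValueCopula C) (hu : 0 < u) (hu1 : u ≤ 1) (hv : 0 < v) (hv1 : v ≤ 1) :
    0 < C u v := by
  have hlim : Tendsto (fun s : ℝ => u ^ s + v ^ s) (𝓝[>] 0) (𝓝 2) := by
    have := ((continuousAt_const_rpow hu.ne' (b := 0)).add
      (continuousAt_const_rpow hv.ne')).tendsto
    norm_num at this
    exact this.mono_left nhdsWithin_le_nhds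
  obtain ⟨s, hs1, hs0 : 0 < s⟩ :=
    ((hlim.eventually (lt_mem_nhds one_lt_two)).and self_mem_nhdsWithin).exists
  have hlow := hE.1.add_sub_one_le (rpow_nonneg hu.le s) (rpow_le_one hu.le hu1 hs0.le)
    (rpow_nonneg hv.le s) (rpow_le_one hv.le hv1 hs0.le)
  rw [hE.2 s hs0 u v hu.le hu1 hv.le hv1] at hlow
  refine (hE.1.nonneg hu.le hu1 hv.le hv1).lt_of_ne fun h0 => ?_
  rw [← h0, zero_rpow hs0.ne'] at hlow
  linarith

lemma exp_neg_stableTailDep (hE : IsExtremeValueCopula C) (hx : 0 ≤ x) (hy : 0 ≤ y) :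
    exp (-stableTailDep C x y) = C (exp (-x)) (exp (-y)) := by
  rw [stableTailDep, neg_neg,
    exp_log (hE.pos (exp_pos _) (exp_neg_le_one hx) (exp_pos _) (exp_neg_le_one hy))]

lemma apply_exp_neg_mul (hE : IsExtremeValueCopula C) (hx : 0 ≤ x) (hy : 0 ≤ y) {s : ℝ}
    (hs : 0 < s) :
    C (exp (-(s * x))) (exp (-(s * y))) = exp (-(s * stableTailDep C x y)) := by
  have h := hE.2 s hs _ _ (exp_pos _).le (exp_neg_le_one hx) (exp_pos _).le (exp_neg_le_one hy)
  simp only [← exp_mul, ← hE.exp_neg_stableTailDep hx hy] at h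
  convert h using 3 <;> ring

lemma stableTailDep_mul (hE : IsExtremeValueCopula C) (hx : 0 ≤ x) (hy : 0 ≤ y) {s : ℝ}
    (hs : 0 < s) : stableTailDep C (s * x) (s * y) = s * stableTailDep C x y := by
  rw [stableTailDep, hE.apply_exp_neg_mul hx hy hs, log_exp, neg_neg]

lemma stableTailDep_zero_right (hE : IsExtremeValueCopula C) (hx : 0 ≤ x) :
    stableTailDep C x 0 = x := by
  rw [stableTailDep, neg_zero, exp_zero,
    (hE.1.1 _ (exp_pos _).le (exp_neg_le_one hx)).2.2.1, log_exp, neg_neg]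

lemma stableTailDep_zero_left (hE : IsExtremeValueCopula C) (hy : 0 ≤ y) :
    stableTailDep C 0 y = y := by
  rw [stableTailDep, neg_zero, exp_zero,
    (hE.1.1 _ (exp_pos _).le (exp_neg_le_one hy)).2.2.2, log_exp, neg_neg]

lemma stableTailDep_mono_left (hE : IsExtremeValueCopula C) (hx : 0 ≤ x) (hxx' : x ≤ x')
    (hy : 0 ≤ y) : stableTailDep C x y ≤ stableTailDep C x' y := by
  have hx' := hx.trans hxx'
  have h := hE.1.mono_left (exp_pos _).le (exp_le_exp.2 (neg_le_neg hxx')) (exp_neg_le_one hx)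
    (exp_pos _).le (exp_neg_le_one hy)
  rw [← hE.exp_neg_stableTailDep hx' hy, ← hE.exp_neg_stableTailDep hx hy] at h
  linarith [exp_le_exp.1 h]

lemma stableTailDep_add_le (hE : IsExtremeValueCopula C) (hx : 0 ≤ x) (hy : 0 ≤ y) {h : ℝ}
    (hh : 0 ≤ h) : stableTailDep C (x + h) y ≤ stableTailDep C x y + h := by
  have hxh : 0 ≤ x + h := by linarith
  suffices x + stableTailDep C (x + h) y ≤ stableTailDep C x y + (x + h) by linarith
  refine add_le_add_of_forall_exp_neg_mul fun s hs => ?_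
  have := hE.1.sub_le_sub_of_le_left (exp_pos _).le
    (exp_le_exp.2 (neg_le_neg (mul_le_mul_of_nonneg_left (le_add_of_nonneg_right hh) hs.le)))
    (exp_neg_le_one (mul_nonneg hs.le hx)) (exp_pos _).le (exp_neg_le_one (mul_nonneg hs.le hy))
  rw [hE.apply_exp_neg_mul hx hy hs, hE.apply_exp_neg_mul hxh hy hs] at this
  linarith

lemma stableTailDep_submodular (hE : IsExtremeValueCopula C) {x₁ x₂ y₁ y₂ : ℝ} (hx₁ : 0 ≤ x₁)
    (hx : x₁ ≤ x₂) (hy₁ : 0 ≤ y₁) (hy : y₁ ≤ y₂) :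
    stableTailDep C x₁ y₁ + stableTailDep C x₂ y₂ ≤
      stableTailDep C x₂ y₁ + stableTailDep C x₁ y₂ := by
  have hx₂ := hx₁.trans hx
  have hy₂ := hy₁.trans hy
  refine add_le_add_of_forall_exp_neg_mul fun s hs => ?_
  have := hE.1.2 _ _ _ _ (exp_pos _).le
    (exp_le_exp.2 (neg_le_neg (mul_le_mul_of_nonneg_left hx hs.le)))
    (exp_neg_le_one (mul_nonneg hs.le hx₁)) (exp_pos _).le
    (exp_le_exp.2 (neg_le_neg (mul_le_mul_of_nonneg_left hy hs.le)))
    (exp_neg_le_one (mul_nonneg hs.le hy₁))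
  rw [hE.apply_exp_neg_mul hx₁ hy₁ hs, hE.apply_exp_neg_mul hx₂ hy₂ hs,
    hE.apply_exp_neg_mul hx₁ hy₂ hs, hE.apply_exp_neg_mul hx₂ hy₁ hs] at this
  linarith

lemma tailProfile_zero (hE : IsExtremeValueCopula C) : tailProfile C 0 = 1 := by
  rw [tailProfile_of_nonneg le_rfl, hE.stableTailDep_zero_left zero_le_one]

lemma monotone_tailProfile (hE : IsExtremeValueCopula C) : Monotone (tailProfile C) :=
  fun _ _ h => hE.stableTailDep_mono_left (le_max_right _ _) (max_le_max_right 0 h) zero_le_one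

lemma lipschitzWith_tailProfile (hE : IsExtremeValueCopula C) :
    LipschitzWith 1 (tailProfile C) := by
  refine LipschitzWith.of_le_add_mul 1 fun x y => ?_
  rw [NNReal.coe_one, one_mul]
  rcases le_total x y with hxy | hyx
  · linarith [hE.monotone_tailProfile hxy, dist_nonneg (x := x) (y := y)]
  · have hmax : max x 0 ≤ max y 0 + (x - y) :=
      max_le (by linarith [le_max_left y 0]) (by linarith [le_max_right y 0])
    have := hE.stableTailDep_add_le (le_max_right y 0) zero_le_one (sub_nonneg.2 hyx)
    have := hE.stableTailDep_mono_left (le_max_right x 0) hmax zero_le_one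
    rw [Real.dist_eq, abs_of_nonneg (sub_nonneg.2 hyx)]
    simp only [tailProfile]
    linarith

/-- Submodularity of `stableTailDep C` on the rectangle `[s x, s (x + h)] × [1, s]`. -/
lemma mul_sub_tailProfile_le (hE : IsExtremeValueCopula C) {s x h : ℝ} (hs : 1 ≤ s)
    (hx : 0 ≤ x) (hh : 0 ≤ h) :
    s * (tailProfile C (x + h) - tailProfile C x) ≤
      tailProfile C (s * (x + h)) - tailProfile C (s * x) := by
  have hs0 : 0 < s := zero_lt_one.trans_le hs
  have hxh : 0 ≤ x + h := by linarith
  have hsub := hE.stableTailDep_submodular (mul_nonneg hs0.le hx)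
    (mul_le_mul_of_nonneg_left (le_add_of_nonneg_right hh) hs0.le) zero_le_one hs
  have hhom₁ := hE.stableTailDep_mul hxh zero_le_one hs0
  have hhom₂ := hE.stableTailDep_mul hx zero_le_one hs0
  rw [mul_one] at hhom₁ hhom₂
  rw [tailProfile_of_nonneg hxh, tailProfile_of_nonneg hx, tailProfile_of_nonneg (by positivity),
    tailProfile_of_nonneg (by positivity)]
  linarith

lemma deriv_tailProfile_mem_Icc (hE : IsExtremeValueCopula C) (z : ℝ) :
    deriv (tailProfile C) z ∈ Icc 0 1 :=
  ⟨hE.monotone_tailProfile.deriv_nonneg,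
    (le_abs_self _).trans (by simpa using norm_deriv_le_of_lipschitz hE.lipschitzWith_tailProfile)⟩

lemma deriv_tailProfile_le_of_le (hE : IsExtremeValueCopula C) {w x : ℝ} (hw : 0 < w)
    (hwx : w ≤ x) (hdw : DifferentiableAt ℝ (tailProfile C) w)
    (hdx : DifferentiableAt ℝ (tailProfile C) x) :
    deriv (tailProfile C) w ≤ deriv (tailProfile C) x := by
  set s := x / w
  have hs : 1 ≤ s := (one_le_div hw).2 hwx
  have hsw : s * w = x := div_mul_cancel₀ x hw.ne'
  have hdil :
      HasDerivAt (fun h => tailProfile C (s * (w + h))) (deriv (tailProfile C) x * s) 0 := by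
    have hin : HasDerivAt (fun h => s * (w + h)) s 0 := by
      simpa using ((hasDerivAt_id (0 : ℝ)).const_add w).const_mul s
    have hout : HasDerivAt (tailProfile C) (deriv (tailProfile C) x) (s * (w + 0)) := by
      rw [add_zero, hsw]
      exact hdx.hasDerivAt
    exact (hout.comp 0 hin :)
  have hshift : HasDerivAt (fun h => tailProfile C (w + h)) (deriv (tailProfile C) w) 0 :=
    HasDerivAt.comp_const_add w 0 (by rw [add_zero]; exact hdw.hasDerivAt)
  have := HasDerivAt.nonneg_of_forall_lt_le ((hdil.sub_const (tailProfile C (s * w))).sub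
      ((hshift.sub_const (tailProfile C w)).const_mul s)) fun h hh => by
    simpa using hE.mul_sub_tailProfile_le hs hw.le hh.le
  nlinarith

/-- Take `α` the infimum of the a.e. derivative on `(1, ∞)`: by `deriv_tailProfile_le_of_le` it
bounds the a.e. derivative on `(0, 1]` from above, and integrating gives the supporting line. -/
lemma exists_supportLine_tailProfile (hE : IsExtremeValueCopula C) :
    ∃ α ∈ Icc (0 : ℝ) 1, ∀ z, 0 ≤ z → tailProfile C 1 + α * (z - 1) ≤ tailProfile C z := by
  have hae := hE.monotone_tailProfile.ae_differentiableAt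
  set S := deriv (tailProfile C) '' {x | 1 < x ∧ DifferentiableAt ℝ (tailProfile C) x}
  obtain ⟨x₀, hx₀, hdx₀⟩ := Measure.exists_mem_of_measure_ne_zero_of_ae (μ := volume)
    (s := Ioi (1 : ℝ)) (by simp [volume_Ioi]) (ae_restrict_of_ae hae)
  have hSne : S.Nonempty := ⟨_, x₀, ⟨hx₀, hdx₀⟩, rfl⟩
  have hSbdd : BddBelow S := ⟨0, forall_mem_image.2 fun x _ => (hE.deriv_tailProfile_mem_Icc x).1⟩
  refine ⟨sInf S, ⟨le_csInf hSne (forall_mem_image.2 fun x _ =>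
    (hE.deriv_tailProfile_mem_Icc x).1), (csInf_le hSbdd ⟨x₀, ⟨hx₀, hdx₀⟩, rfl⟩).trans
    (hE.deriv_tailProfile_mem_Icc x₀).2⟩, fun z hz => ?_⟩
  rcases le_total 1 z with h1z | hz1
  · have := hE.lipschitzWith_tailProfile.mul_sub_le_sub_of_ae_le_deriv h1z <| by
      filter_upwards [hae] with x hx hxI
      exact csInf_le hSbdd ⟨x, ⟨hxI.1, hx⟩, rfl⟩
    linarith
  · have := hE.lipschitzWith_tailProfile.sub_le_mul_sub_of_ae_deriv_le hz1 <| by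
      filter_upwards [hae] with x hx hxI
      exact le_csInf hSne (forall_mem_image.2 fun y hy =>
        hE.deriv_tailProfile_le_of_le (hz.trans_lt hxI.1) (hxI.2.trans hy.1.le) hx hy.2)
    linarith

lemma apply_self_eq_rpow (hE : IsExtremeValueCopula C) {t : ℝ} (ht0 : 0 < t) (ht1 : t < 1) :
    C t t = t ^ tailProfile C 1 := by
  have hs : 0 < -log t := neg_pos.2 (log_neg ht0 ht1)
  have h := hE.apply_exp_neg_mul zero_le_one zero_le_one hs
  rw [mul_one, neg_neg, exp_log ht0] at h
  rw [h, tailProfile_of_nonneg zero_le_one, rpow_def_of_pos ht0]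
  ring_nf

lemma tailProfile_one_eq (hE : IsExtremeValueCopula C) {lam : ℝ} (hU : HasUpperTailDep C lam) :
    tailProfile C 1 = 2 - lam := by
  set θ := tailProfile C 1
  have hder : HasDerivAt (fun t : ℝ => t ^ θ) θ 1 := by
    simpa using Real.hasDerivAt_rpow_const (x := 1) (p := θ) (Or.inl one_ne_zero)
  have hslope := (hasDerivWithinAt_iff_tendsto_slope' (s := Iio 1) (lt_irrefl 1)).1
    hder.hasDerivWithinAt
  refine tendsto_nhds_unique (hslope.congr' ?_) hU
  filter_upwards [Ioo_mem_nhdsLT zero_lt_one] with t ht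
  rw [slope_def_field, hE.apply_self_eq_rpow ht.1 ht.2, one_rpow,
    div_eq_div_iff (by linarith [ht.2]) (by linarith [ht.2])]
  ring

lemma le_stableTailDep_of_supportLine (hE : IsExtremeValueCopula C) {α : ℝ} (hα : α ≤ 1)
    (hsupp : ∀ z, 0 ≤ z → tailProfile C 1 + α * (z - 1) ≤ tailProfile C z) {x y : ℝ}
    (hx : 0 ≤ x) (hy : 0 ≤ y) : α * x + (tailProfile C 1 - α) * y ≤ stableTailDep C x y := by
  rcases hy.eq_or_lt with rfl | hy
  · rw [hE.stableTailDep_zero_right hx, mul_zero, add_zero]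
    exact mul_le_of_le_one_left hx hα
  · have hz : 0 ≤ x / y := div_nonneg hx hy.le
    have h := hE.stableTailDep_mul hz zero_le_one hy
    rw [mul_div_cancel₀ x hy.ne', mul_one] at h
    have := mul_le_mul_of_nonneg_left (hsupp _ hz) hy.le
    rw [tailProfile_of_nonneg hz, ← h, mul_add, mul_left_comm, mul_sub,
      mul_div_cancel₀ x hy.ne'] at this
    linarith

lemma le_rpow_mul_rpow_of_supportLine (hE : IsExtremeValueCopula C) {α : ℝ} (hα : α ≤ 1)
    (hsupp : ∀ z, 0 ≤ z → tailProfile C 1 + α * (z - 1) ≤ tailProfile C z) {u v : ℝ}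
    (hu : u ∈ Icc (0 : ℝ) 1) (hv : v ∈ Icc (0 : ℝ) 1) :
    C u v ≤ u ^ α * v ^ (tailProfile C 1 - α) := by
  rcases hu.1.eq_or_lt with rfl | hu0
  · rw [(hE.1.1 v hv.1 hv.2).2.1]
    exact mul_nonneg (rpow_nonneg le_rfl _) (rpow_nonneg hv.1 _)
  rcases hv.1.eq_or_lt with rfl | hv0
  · rw [(hE.1.1 u hu.1 hu.2).1]
    exact mul_nonneg (rpow_nonneg hu.1 _) (rpow_nonneg le_rfl _)
  have hx : 0 ≤ -log u := neg_nonneg.2 (log_nonpos hu.1 hu.2)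
  have hy : 0 ≤ -log v := neg_nonneg.2 (log_nonpos hv.1 hv.2)
  have h := hE.exp_neg_stableTailDep hx hy
  rw [neg_neg, neg_neg, exp_log hu0, exp_log hv0] at h
  rw [← h, rpow_def_of_pos hu0, rpow_def_of_pos hv0, ← exp_add, exp_le_exp]
  linarith [hE.le_stableTailDep_of_supportLine hα hsupp hx hy]

end IsExtremeValueCopula

theorem stmt_1_general (C : ℝ → ℝ → ℝ) (lam : ℝ)
    (hC : IsExtremeValueCopula C) (hU : HasUpperTailDep C lam) :
    ∃ a b : ℝ, 0 ≤ a ∧ 0 ≤ b ∧ a + b = lam ∧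
      ∀ u v : ℝ, u ∈ Set.Icc (0:ℝ) 1 → v ∈ Set.Icc (0:ℝ) 1 →
        C u v ≤ min u (min v (u ^ (1 - a) * v ^ (1 - b))) := by
  obtain ⟨α, ⟨hα0, hα1⟩, hsupp⟩ := hC.exists_supportLine_tailProfile
  have hθ := hC.tailProfile_one_eq hU
  have hb : tailProfile C 1 - α ≤ 1 := by
    have := hsupp 0 le_rfl
    rw [hC.tailProfile_zero] at this
    linarith
  refine ⟨1 - α, 1 - (tailProfile C 1 - α), by linarith, by linarith, by linarith,
    fun u v hu hv => ?_⟩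
  rw [sub_sub_cancel, sub_sub_cancel]
  exact le_min (hC.1.le_left hu.1 hu.2 hv.1 hv.2) (le_min (hC.1.le_right hu.1 hu.2 hv.1 hv.2)
    (hC.le_rpow_mul_rpow_of_supportLine hα1 hsupp hu hv))

theorem stmt_1 (C : ℝ → ℝ → ℝ) (lam : ℝ) (hlam : lam ∈ Set.Icc (0:ℝ) 1)
    (hC : IsExtremeValueCopula C) (hU : HasUpperTailDep C lam) :
    ∃ a b : ℝ, 0 ≤ a ∧ 0 ≤ b ∧ a + b = lam ∧
      ∀ u v : ℝ, u ∈ Set.Icc (0:ℝ) 1 → v ∈ Set.Icc (0:ℝ) 1 →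
        C u v ≤ min u (min v (u ^ (1 - a) * v ^ (1 - b))) :=
  stmt_1_general C lam hC hU
end
end

section
/- Let λ ∈ [0,1], let a, b ≥ 0 with a + b = λ, and define A(t) = max{1 − t, t, (1−a)(1−t) + (1−b)t} for t ∈ [0,1]. Then ∫₀¹ dt/(A(t)+1)² = (1/3)·(1 − 4(1−λ)²/((4−λ)² − 9(a−b)²)). Consequently, the Spearman coefficient ρ = 12∫₀¹ dt/(A(t)+1)² − 3 of the copula min{u, v, u^(1-a)v^(1-b)} equals 1 − 16(1−λ)²/((4−λ)² − 9(a−b)²). -/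
/-!
On `[0, 1]` the function `A` is the upper envelope of `1 - t`, `t` and an affine function
`ℓ(t)` lying between them; `ℓ` overtakes `1 - t` at `t₁ = a / (1 + a - b)` and drops back
below `t` at `t₂ = (1 - a) / (1 + b - a)`, so `A` is affine on each of `[0, t₁]`, `[t₁, t₂]`,
`[t₂, 1]`. On an interval where `A + 1 = c + d t > 0`, the integral of `1 / (A + 1)²`
over `[x, y]` is `(y - x) / ((c + d x) (c + d y))`, and adding the three pieces gives the
closed form. When `a + b = 1` the middle piece collapses and `A(t) = max (1 - t) t`.
-/

open MeasureTheory Set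

theorem integral_one_div_affine_sq {x y c d : ℝ} (hxy : x ≤ y)
    (hpos : ∀ t ∈ Icc x y, 0 < c + d * t) :
    ∫ t in x..y, 1 / (c + d * t) ^ 2 = (y - x) / ((c + d * x) * (c + d * y)) := by
  have hx := hpos x ⟨le_rfl, hxy⟩
  -- this antiderivative avoids dividing by `d`
  have hderiv : ∀ t ∈ uIcc x y,
      HasDerivAt (fun s => (s - x) / ((c + d * x) * (c + d * s))) (1 / (c + d * t) ^ 2) t := by
    intro t ht
    rw [uIcc_of_le hxy] at ht
    have ht := hpos t ht
    have hden : HasDerivAt (fun s => (c + d * x) * (c + d * s)) ((c + d * x) * d) t := by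
      simpa using (((hasDerivAt_id t).const_mul d).const_add c).const_mul (c + d * x)
    refine (((hasDerivAt_id t).sub_const x).div hden (by positivity)).congr_deriv ?_
    simp only [id]
    field_simp
    ring
  have hcont : ContinuousOn (fun t => 1 / (c + d * t) ^ 2) (uIcc x y) := by
    rw [uIcc_of_le hxy]
    exact continuousOn_const.div (by fun_prop) fun t ht => (pow_pos (hpos t ht) 2).ne'
  rw [intervalIntegral.integral_eq_sub_of_hasDerivAt hderiv hcont.intervalIntegrable]
  simp

noncomputable def pickands (a b t : ℝ) : ℝ :=
  max (1 - t) (max t ((1 - a) * (1 - t) + (1 - b) * t))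

section Pickands

variable {a b t : ℝ}

theorem pickands_eq_one_sub (ht : t ≤ 1 / 2) (hab : t * (1 + a - b) ≤ a) :
    pickands a b t = 1 - t :=
  max_eq_left (max_le (by linarith) (by linarith))

theorem pickands_eq_self (ht : 1 / 2 ≤ t) (hab : 1 - a ≤ t * (1 + b - a)) :
    pickands a b t = t := by
  rw [pickands, max_eq_left (by linarith : (1 - a) * (1 - t) + (1 - b) * t ≤ t)]
  exact max_eq_right (by linarith)

theorem pickands_eq_affine (h₁ : a ≤ t * (1 + a - b)) (h₂ : t * (1 + b - a) ≤ 1 - a) :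
    pickands a b t = (1 - a) * (1 - t) + (1 - b) * t := by
  rw [pickands, max_eq_right (by linarith : t ≤ (1 - a) * (1 - t) + (1 - b) * t)]
  exact max_eq_right (by linarith)

theorem one_half_le_pickands : 1 / 2 ≤ pickands a b t := by
  rcases le_total t (1 / 2) with h | h
  · exact le_max_of_le_left (by linarith)
  · exact le_max_of_le_right (le_max_of_le_left h)

@[fun_prop]
theorem continuous_pickands : Continuous (pickands a b) := by
  unfold pickands
  fun_prop

theorem integral_one_div_pickands_add_one_sq_of_eqOn {x y c d : ℝ} (hxy : x ≤ y)
    (h : ∀ t ∈ Icc x y, pickands a b t + 1 = c + d * t) :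
    ∫ t in x..y, 1 / (pickands a b t + 1) ^ 2
      = (y - x) / ((c + d * x) * (c + d * y)) := by
  rw [← integral_one_div_affine_sq hxy fun t ht => ?_]
  · refine intervalIntegral.integral_congr fun t ht => ?_
    rw [uIcc_of_le hxy] at ht
    simp only [h t ht]
  · rw [← h t ht]
    linarith [one_half_le_pickands (a := a) (b := b) (t := t)]

theorem integral_one_div_pickands_add_one_sq {t₁ t₂ : ℝ} (h₀ : 0 ≤ t₁) (h₁₂ : t₁ ≤ t₂)
    (h₂ : t₂ ≤ 1)
    (hleft : ∀ t ∈ Icc 0 t₁, pickands a b t = 1 - t)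
    (hmid : ∀ t ∈ Icc t₁ t₂, pickands a b t = (1 - a) * (1 - t) + (1 - b) * t)
    (hright : ∀ t ∈ Icc t₂ 1, pickands a b t = t) :
    ∫ t in (0 : ℝ)..1, 1 / (pickands a b t + 1) ^ 2
      = t₁ / (2 * (2 - t₁))
        + (t₂ - t₁) / ((2 - a + (a - b) * t₁) * (2 - a + (a - b) * t₂))
        + (1 - t₂) / ((1 + t₂) * 2) := by
  have hcont : Continuous fun t => 1 / (pickands a b t + 1) ^ 2 :=
    continuous_const.div (by fun_prop) fun t =>
      (pow_pos (by linarith [one_half_le_pickands (a := a) (b := b) (t := t)]) 2).ne'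
  have hint x y := hcont.intervalIntegrable (μ := volume) x y
  rw [← intervalIntegral.integral_add_adjacent_intervals (hint 0 t₁) (hint t₁ 1),
    ← intervalIntegral.integral_add_adjacent_intervals (hint t₁ t₂) (hint t₂ 1),
    integral_one_div_pickands_add_one_sq_of_eqOn (c := 2) (d := -1) h₀
      fun t ht => by rw [hleft t ht]; ring,
    integral_one_div_pickands_add_one_sq_of_eqOn (c := 2 - a) (d := a - b) h₁₂
      fun t ht => by rw [hmid t ht]; ring,
    integral_one_div_pickands_add_one_sq_of_eqOn (c := 1) (d := 1) h₂
      fun t ht => by rw [hright t ht]; ring]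
  ring

end Pickands

theorem integral_one_div_pickands_add_one_sq_of_add_eq_one {a b : ℝ} (ha : 0 ≤ a) (hb : 0 ≤ b)
    (hab : a + b = 1) : ∫ t in (0 : ℝ)..1, 1 / (pickands a b t + 1) ^ 2 = 1 / 3 := by
  rw [integral_one_div_pickands_add_one_sq (t₁ := 1 / 2) (t₂ := 1 / 2) (by norm_num) le_rfl
    (by norm_num)]
  · norm_num
  · exact fun t ⟨_, ht⟩ => pickands_eq_one_sub ht (by nlinarith)
  · exact fun t ⟨ht₁, ht₂⟩ => pickands_eq_affine (by nlinarith) (by nlinarith)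
  · exact fun t ⟨ht, _⟩ => pickands_eq_self ht (by nlinarith)

theorem integral_one_div_pickands_add_one_sq_of_add_lt_one {a b : ℝ} (ha : 0 ≤ a) (hb : 0 ≤ b)
    (hab : a + b < 1) :
    ∫ t in (0 : ℝ)..1, 1 / (pickands a b t + 1) ^ 2
      = 1 / 3 * (1 - 4 * (1 - (a + b)) ^ 2 / ((4 - (a + b)) ^ 2 - 9 * (a - b) ^ 2)) := by
  have hd₁ : 0 < 1 + a - b := by linarith
  have hd₂ : 0 < 1 + b - a := by linarith
  have ht₁ : a / (1 + a - b) ≤ 1 / 2 := by rw [div_le_iff₀ hd₁]; linarith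
  have ht₂ : 1 / 2 ≤ (1 - a) / (1 + b - a) := by rw [le_div_iff₀ hd₂]; linarith
  rw [integral_one_div_pickands_add_one_sq (by positivity) (ht₁.trans ht₂)
    ((div_le_one hd₂).2 (by linarith))]
  · have : 2 + a - b * 2 ≠ 0 := by linarith
    have : 2 + b - a * 2 ≠ 0 := by linarith
    -- `A t₁ + 1` and `A t₂ + 1`, each read off from both adjacent pieces
    have e₀ : 2 - a / (1 + a - b) = (2 + a - b * 2) / (1 + a - b) := by field_simp; ring
    have e₁ : 2 - a + (a - b) * (a / (1 + a - b)) = (2 + a - b * 2) / (1 + a - b) := by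
      field_simp; ring
    have e₂ : 2 - a + (a - b) * ((1 - a) / (1 + b - a)) = (2 + b - a * 2) / (1 + b - a) := by
      field_simp; ring
    have e₃ : 1 + (1 - a) / (1 + b - a) = (2 + b - a * 2) / (1 + b - a) := by field_simp; ring
    rw [e₀, e₁, e₂, e₃,
      show (4 - (a + b)) ^ 2 - 9 * (a - b) ^ 2 = 4 * (2 + a - b * 2) * (2 + b - a * 2) by ring]
    field_simp
    ring
  · exact fun t ⟨_, ht⟩ => pickands_eq_one_sub (ht.trans ht₁) ((le_div_iff₀ hd₁).1 ht)
  · exact fun t ⟨ht₁, ht₂⟩ =>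
      pickands_eq_affine ((div_le_iff₀ hd₁).1 ht₁) ((le_div_iff₀ hd₂).1 ht₂)
  · exact fun t ⟨ht, _⟩ => pickands_eq_self (ht₂.trans ht) ((div_le_iff₀ hd₂).1 ht)

theorem stmt_5 (lam a b : ℝ) (hlam : lam ∈ Set.Icc (0:ℝ) 1)
    (ha : 0 ≤ a) (hb : 0 ≤ b) (hab : a + b = lam)
    (A : ℝ → ℝ)
    (hA : ∀ t ∈ Set.Icc (0:ℝ) 1, A t = max (1 - t) (max t ((1 - a) * (1 - t) + (1 - b) * t))) :
    (∫ t in (0:ℝ)..1, 1 / (A t + 1) ^ 2)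
        = (1 / 3) * (1 - 4 * (1 - lam) ^ 2 / ((4 - lam) ^ 2 - 9 * (a - b) ^ 2)) ∧
    12 * (∫ t in (0:ℝ)..1, 1 / (A t + 1) ^ 2) - 3
        = 1 - 16 * (1 - lam) ^ 2 / ((4 - lam) ^ 2 - 9 * (a - b) ^ 2) := by
  have hpickands : ∫ t in (0:ℝ)..1, 1 / (A t + 1) ^ 2
      = ∫ t in (0:ℝ)..1, 1 / (pickands a b t + 1) ^ 2 :=
    intervalIntegral.integral_congr fun t ht => by
      rw [uIcc_of_le zero_le_one] at ht
      simp only [hA t ht, pickands]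
  have hvalue : ∫ t in (0:ℝ)..1, 1 / (pickands a b t + 1) ^ 2
      = 1 / 3 * (1 - 4 * (1 - lam) ^ 2 / ((4 - lam) ^ 2 - 9 * (a - b) ^ 2)) := by
    subst hab
    rcases hlam.2.eq_or_lt with h | h
    · rw [integral_one_div_pickands_add_one_sq_of_add_eq_one ha hb h, h]
      norm_num
    · exact integral_one_div_pickands_add_one_sq_of_add_lt_one ha hb h
  rw [hpickands, hvalue]
  exact ⟨rfl, by ring⟩
end

section
/- Let λ ∈ [0,1] and let A : [0,1] → ℝ be a convex function with max{t, 1−t} ≤ A(t) ≤ 1 for all t ∈ [0,1] and A(1/2) = 1 − λ/2. Then 12∫₀¹ dt/(A(t)+1)² − 3 ≥ 3λ/(4 − λ), with equality for A(t) = 1 − λ·min{t, 1−t}. (Lower bound on Spearman's ρ of an extreme value copula with upper tail dependence coefficient λ.) -/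
open MeasureTheory Filter Set Real

noncomputable section

/-! Convexity of `A` on `[0, 1/2]` and on `[1/2, 1]`, together with `A 0, A 1 ≤ 1`, puts `A` below
the tent `B t = 1 - λ min{t, 1 - t}`, which is the extremal dependence function. Since
`x ↦ 1/(x+1)²` is decreasing, `∫₀¹ dt/(A+1)² ≥ ∫₀¹ dt/(B+1)²`, and by the symmetry of `B` about `1/2`
the latter is `2∫₀^{1/2} dt/(2 - λt)² = 1/(4 - λ)`. -/

lemma ConvexOn.le_tent {f : ℝ → ℝ} (hf : ConvexOn ℝ (Icc 0 1) f) (h0 : f 0 ≤ 1) (h1 : f 1 ≤ 1)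
    {t : ℝ} (ht : t ∈ Icc 0 1) : f t ≤ 1 - 2 * (1 - f (1 / 2)) * min t (1 - t) := by
  have hhalf : (1 / 2 : ℝ) ∈ Icc 0 1 := by norm_num
  rcases le_total t (1 / 2) with h | h
  · have hcomb := hf.2 (left_mem_Icc.2 zero_le_one) hhalf (by linarith : (0:ℝ) ≤ 1 - 2 * t)
      (by linarith [ht.1] : (0:ℝ) ≤ 2 * t) (by ring)
    simp only [smul_eq_mul] at hcomb
    rw [show (1 - 2 * t) * 0 + 2 * t * (1 / 2 : ℝ) = t by ring] at hcomb
    rw [min_eq_left (by linarith)]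
    nlinarith
  · have hcomb := hf.2 hhalf (right_mem_Icc.2 zero_le_one) (by linarith [ht.2] : (0:ℝ) ≤ 2 - 2 * t)
      (by linarith : (0:ℝ) ≤ 2 * t - 1) (by ring)
    simp only [smul_eq_mul] at hcomb
    rw [show (2 - 2 * t) * (1 / 2 : ℝ) + (2 * t - 1) * 1 = t by ring] at hcomb
    rw [min_eq_right (by linarith)]
    nlinarith

lemma intervalIntegral.integral_eq_two_mul_of_symm {f : ℝ → ℝ} {a : ℝ}
    (hsymm : ∀ t, f (a - t) = f t) (hf : IntervalIntegrable f volume 0 a) :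
    ∫ t in (0:ℝ)..a, f t = 2 * ∫ t in (0:ℝ)..a / 2, f t := by
  have hmid : a / 2 ∈ uIcc 0 a := by
    rcases le_total 0 a with h | h
    · exact (uIcc_of_le h).symm ▸ ⟨by linarith, by linarith⟩
    · exact (uIcc_of_ge h).symm ▸ ⟨by linarith, by linarith⟩
  rw [← integral_add_adjacent_intervals (hf.mono_set (uIcc_subset_uIcc_left hmid))
    (hf.mono_set (uIcc_subset_uIcc_right hmid))]
  have hsecond : ∫ t in a / 2..a, f t = ∫ t in (0:ℝ)..a / 2, f t :=
    calc ∫ t in a / 2..a, f t = ∫ t in a / 2..a, f (a - t) := by simp only [hsymm]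
      _ = ∫ t in (0:ℝ)..a / 2, f t := by rw [integral_comp_sub_left f, sub_self, sub_half]
  rw [hsecond]
  ring

lemma integral_one_div_two_sub_mul_sq {lam : ℝ} (hlam : lam < 4) :
    ∫ t in (0:ℝ)..1 / 2, 1 / (2 - lam * t) ^ 2 = 1 / (2 * (4 - lam)) := by
  have hne : ∀ t ∈ uIcc (0:ℝ) (1 / 2), 2 - lam * t ≠ 0 := by
    intro t ht
    rw [uIcc_of_le (by norm_num)] at ht
    rcases le_total 0 lam with h | h <;> nlinarith [ht.1, ht.2]
  have hderiv : ∀ t ∈ uIcc (0:ℝ) (1 / 2),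
      HasDerivAt (fun x => x / (2 * (2 - lam * x))) (1 / (2 - lam * t) ^ 2) t := by
    intro t ht
    have hden := hne t ht
    refine ((hasDerivAt_id' t).div (((hasDerivAt_id' t).const_mul lam).const_sub 2 |>.const_mul 2)
      (mul_ne_zero two_ne_zero hden)).congr_deriv ?_
    field_simp
    ring
  rw [intervalIntegral.integral_eq_sub_of_hasDerivAt hderiv]
  · field_simp
    ring
  · exact (ContinuousOn.div continuousOn_const (by fun_prop)
      fun t ht => pow_ne_zero 2 (hne t ht)).intervalIntegrable

lemma intervalIntegrable_one_div_tent_add_one_sq {lam : ℝ} (hlam : lam < 4) :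
    IntervalIntegrable (fun t => 1 / ((1 - lam * min t (1 - t)) + 1) ^ 2) volume 0 1 := by
  have hne : ∀ t ∈ uIcc (0:ℝ) 1, (1 - lam * min t (1 - t)) + 1 ≠ 0 := by
    intro t ht
    rw [uIcc_of_le zero_le_one] at ht
    have hmin : 0 ≤ min t (1 - t) ∧ min t (1 - t) ≤ 1 / 2 := by
      constructor
      · exact le_min ht.1 (by linarith [ht.2])
      · rcases le_total t (1 / 2) with h | h
        exacts [min_le_of_left_le h, min_le_of_right_le (by linarith)]
    rcases le_total 0 lam with h | h <;> nlinarith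
  exact (ContinuousOn.div continuousOn_const (by fun_prop)
    fun t ht => pow_ne_zero 2 (hne t ht)).intervalIntegrable

lemma integral_one_div_tent_add_one_sq {lam : ℝ} (hlam : lam < 4) :
    ∫ t in (0:ℝ)..1, 1 / ((1 - lam * min t (1 - t)) + 1) ^ 2 = 1 / (4 - lam) := by
  have hhalf : ∫ t in (0:ℝ)..1 / 2, 1 / ((1 - lam * min t (1 - t)) + 1) ^ 2
      = ∫ t in (0:ℝ)..1 / 2, 1 / (2 - lam * t) ^ 2 := by
    refine intervalIntegral.integral_congr fun t ht => ?_
    rw [uIcc_of_le (by norm_num)] at ht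
    simp only [min_eq_left (by linarith [ht.2] : t ≤ 1 - t)]
    ring
  rw [intervalIntegral.integral_eq_two_mul_of_symm (fun t => by rw [sub_sub_cancel, min_comm])
    (intervalIntegrable_one_div_tent_add_one_sq hlam), hhalf, integral_one_div_two_sub_mul_sq hlam]
  field_simp

lemma intervalIntegrable_one_div_sq_of_le {f : ℝ → ℝ} {a b c : ℝ} (hab : a ≤ b) (hc : 0 < c)
    (hf : ContinuousOn f (Ioo a b)) (hcf : ∀ t ∈ Ioo a b, c ≤ f t) :
    IntervalIntegrable (fun t => 1 / f t ^ 2) volume a b := by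
  rw [intervalIntegrable_iff_integrableOn_Ioc_of_le hab, integrableOn_Ioc_iff_integrableOn_Ioo]
  refine Integrable.mono' (integrable_const (1 / c ^ 2))
    ((ContinuousOn.div continuousOn_const (hf.pow 2) fun t ht =>
      (pow_pos (hc.trans_le (hcf t ht)) 2).ne').aestronglyMeasurable measurableSet_Ioo) ?_
  filter_upwards [ae_restrict_mem measurableSet_Ioo] with t ht
  have hft := hcf t ht
  rw [norm_of_nonneg (by positivity)]
  gcongr

lemma integral_one_div_sq_le_of_le {f g : ℝ → ℝ} {a b c : ℝ} (hab : a ≤ b) (hc : 0 < c)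
    (hf : ContinuousOn f (Ioo a b)) (hg : IntervalIntegrable (fun t => 1 / g t ^ 2) volume a b)
    (hcf : ∀ t ∈ Icc a b, c ≤ f t) (hfg : ∀ t ∈ Icc a b, f t ≤ g t) :
    ∫ t in a..b, 1 / g t ^ 2 ≤ ∫ t in a..b, 1 / f t ^ 2 := by
  refine intervalIntegral.integral_mono_on hab hg
    (intervalIntegrable_one_div_sq_of_le hab hc hf fun t ht => hcf t (Ioo_subset_Icc_self ht))
    fun t ht => ?_
  have hft := hcf t ht
  have hgt := hfg t ht
  have : 0 < f t := hc.trans_le hft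
  gcongr

theorem stmt_7 (lam : ℝ) (hlam : lam ∈ Set.Icc (0:ℝ) 1) (A : ℝ → ℝ)
    (hconv : ConvexOn ℝ (Set.Icc (0:ℝ) 1) A)
    (hbd : ∀ t ∈ Set.Icc (0:ℝ) 1, max t (1 - t) ≤ A t ∧ A t ≤ 1)
    (hmid : A (1 / 2) = 1 - lam / 2) :
    3 * lam / (4 - lam) ≤ 12 * (∫ t in (0:ℝ)..1, 1 / (A t + 1) ^ 2) - 3 ∧
    12 * (∫ t in (0:ℝ)..1, 1 / ((1 - lam * min t (1 - t)) + 1) ^ 2) - 3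
      = 3 * lam / (4 - lam) := by
  obtain ⟨h0, h1⟩ := hlam
  have htent := integral_one_div_tent_add_one_sq (by linarith : lam < 4)
  have h4 : 4 - lam ≠ 0 := by linarith
  refine ⟨?_, by rw [htent]; field_simp; ring⟩
  have hA_ge : ∀ t ∈ Icc (0:ℝ) 1, 1 / 2 ≤ A t := fun t ht => by
    linarith [(hbd t ht).1, le_max_left t (1 - t), le_max_right t (1 - t)]
  have hA_le : ∀ t ∈ Icc (0:ℝ) 1, A t + 1 ≤ (1 - lam * min t (1 - t)) + 1 := fun t ht => by
    have := hconv.le_tent (hbd 0 (by norm_num)).2 (hbd 1 (by norm_num)).2 ht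
    rw [hmid] at this
    linarith
  have hA_cont : ContinuousOn (fun t => A t + 1) (Ioo 0 1) := by
    have := hconv.continuousOn_interior
    rw [interior_Icc] at this
    exact this.add continuousOn_const
  have hmono := integral_one_div_sq_le_of_le zero_le_one (by norm_num : (0:ℝ) < 3 / 2) hA_cont
    (intervalIntegrable_one_div_tent_add_one_sq (by linarith))
    (fun t ht => by linarith [hA_ge t ht]) hA_le
  rw [htent] at hmono
  calc 3 * lam / (4 - lam) = 12 * (1 / (4 - lam)) - 3 := by field_simp; ring
    _ ≤ _ := by linarith
end
end

section
/- Let λ ∈ [0,1] and let A : [0,1] → ℝ be a convex function with max{t, 1−t} ≤ A(t) ≤ 1 for all t ∈ [0,1] and A(1/2) = 1 − λ/2. Then 12∫₀¹ dt/(A(t)+1)² − 3 ≤ 1 − 16((1−λ)/(4−λ))², with equality for A(t) = max{t, 1−t, 1 − λ/2}. (Upper bound on Spearman's ρ of an extreme value copula with upper tail dependence coefficient λ.) -/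
/-!
By convexity `A` has a support line at `1/2`, of some slope `s`; comparing it with
`A 0 = A 1 = 1` gives `|s| ≤ λ`. Hence `A ≥ M_s := max t (max (1 - t) (1 - λ/2 + s (t - 1/2)))`,
and as `x ↦ 1/(x+1)²` decreases, `∫ 1/(A+1)² ≤ ∫ 1/(M_s+1)²`. The function `M_s` is piecewise
affine, and `∫_p^q dt/(a+bt)² = (q-p)/((a+bp)(a+bq))`, so the integral is explicit:
`12 ∫ 1/(M_s+1)² - 3 = 1 - 16((1-λ)/(4-λ))² - 144 s²(1-λ)²/((4-λ)²((4-λ)² - 9s²))`.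
The last term is nonnegative and vanishes for `s = 0`.
-/

open MeasureTheory Set

lemma ConvexOn.add_rightDeriv_mul_sub_le {S : Set ℝ} {f : ℝ → ℝ} {x y : ℝ}
    (hf : ConvexOn ℝ S f) (hx : x ∈ interior S) (hy : y ∈ S) :
    f x + derivWithin f (Ioi x) x * (y - x) ≤ f y := by
  rcases lt_trichotomy y x with hyx | rfl | hxy
  · have h := (hf.slope_le_leftDeriv_of_mem_interior hy hx hyx).trans
      (hf.leftDeriv_le_rightDeriv_of_mem_interior hx)
    rw [slope_def_field, div_le_iff₀ (sub_pos.2 hyx)] at h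
    linarith
  · simp
  · have h := hf.rightDeriv_le_slope_of_mem_interior hx hy hxy
    rw [slope_def_field, le_div_iff₀ (sub_pos.2 hxy)] at h
    linarith

lemma intervalIntegral.integral_mono_on_of_nonneg {f g : ℝ → ℝ} {a b : ℝ} (hab : a ≤ b)
    (hg : IntervalIntegrable g volume a b) (hf : ∀ x ∈ Icc a b, 0 ≤ f x)
    (h : ∀ x ∈ Icc a b, f x ≤ g x) :
    ∫ x in a..b, f x ≤ ∫ x in a..b, g x := by
  rw [intervalIntegral.integral_of_le hab, intervalIntegral.integral_of_le hab]
  refine integral_mono_of_nonneg ?_ hg.1 ?_ <;>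
    filter_upwards [ae_restrict_mem measurableSet_Ioc] with x hx
  exacts [hf x (Ioc_subset_Icc_self hx), h x (Ioc_subset_Icc_self hx)]

lemma integral_one_div_sq_of_eqOn_affine {g : ℝ → ℝ} {a b p q : ℝ} (hpq : p ≤ q)
    (hg : EqOn g (fun t => a + b * t) (Icc p q)) (hp : 0 < g p) (hq : 0 < g q) :
    ∫ t in p..q, 1 / g t ^ 2 = (q - p) / (g p * g q) := by
  have hgp : g p = a + b * p := hg (left_mem_Icc.2 hpq)
  have hgq : g q = a + b * q := hg (right_mem_Icc.2 hpq)
  rw [hgp] at hp ⊢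
  rw [hgq] at hq ⊢
  have hpos : ∀ t ∈ Icc p q, 0 < a + b * t := fun t ht => by
    rcases le_total 0 b with h | h <;> nlinarith [ht.1, ht.2]
  -- `(t - p) / (g p * g t)` is an antiderivative also when `b = 0`
  have hderiv : ∀ t ∈ uIcc p q, HasDerivAt (fun t => (t - p) / ((a + b * p) * (a + b * t)))
      (1 / (a + b * t) ^ 2) t := by
    intro t ht
    rw [uIcc_of_le hpq] at ht
    have := hpos t ht
    have h1 : HasDerivAt (fun t => (a + b * p) * (a + b * t)) ((a + b * p) * b) t := by
      simpa using ((hasDerivAt_id t).const_mul b |>.const_add a).const_mul (a + b * p)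
    refine (((hasDerivAt_id' t).sub_const p).div h1 (by positivity)).congr_deriv ?_
    rw [div_eq_div_iff (by positivity) (by positivity)]
    ring
  rw [intervalIntegral.integral_congr (fun t ht => by rw [hg (uIcc_of_le hpq ▸ ht)]),
    intervalIntegral.integral_eq_sub_of_hasDerivAt hderiv]
  · simp
  · refine ContinuousOn.intervalIntegrable (ContinuousOn.div continuousOn_const (by fun_prop) ?_)
    intro t ht
    have := hpos t (uIcc_of_le hpq ▸ ht)
    positivity

noncomputable def pickandsMinorant (lam s t : ℝ) : ℝ := max t (max (1 - t) (1 - lam / 2 + s * (t - 1 / 2)))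

lemma one_half_le_pickandsMinorant (lam s t : ℝ) : 1 / 2 ≤ pickandsMinorant lam s t := by
  unfold pickandsMinorant
  rcases le_total t (1 / 2) with h | h
  · exact le_max_of_le_right (le_max_of_le_left (by linarith))
  · exact le_max_of_le_left h

lemma continuous_one_div_sq_pickandsMinorant (lam s : ℝ) :
    Continuous fun t => 1 / (pickandsMinorant lam s t + 1) ^ 2 := by
  refine continuous_const.div (by unfold pickandsMinorant; fun_prop) fun t => ?_
  have := one_half_le_pickandsMinorant lam s t
  positivity

lemma integral_pickandsMinorant_eq_sum {lam s t₁ t₂ : ℝ} (hs : |s| ≤ 1)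
    (ht₁ : t₁ ∈ Icc 0 (1 / 2)) (ht₂ : t₂ ∈ Icc (1 / 2) 1)
    -- the line meets `1 - t` at `t₁` and `t` at `t₂`
    (hk₁ : (1 + s) * t₁ = (lam + s) / 2) (hk₂ : (1 - s) * t₂ = 1 - (lam + s) / 2) :
    ∫ t in (0 : ℝ)..1, 1 / (pickandsMinorant lam s t + 1) ^ 2
      = t₁ / (2 * (2 - t₁)) + (t₂ - t₁) / ((2 - t₁) * (1 + t₂)) + (1 - t₂) / ((1 + t₂) * 2) := by
  obtain ⟨hs₁, hs₂⟩ := abs_le.1 hs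
  have hL₁ : ∀ t, 1 - lam / 2 + s * (t - 1 / 2) - (1 - t) = (1 + s) * (t - t₁) := fun t => by
    linear_combination hk₁
  have hL₂ : ∀ t, 1 - lam / 2 + s * (t - 1 / 2) - t = (1 - s) * (t₂ - t) := fun t => by
    linear_combination (-1 : ℝ) * hk₂
  set g : ℝ → ℝ := fun t => pickandsMinorant lam s t + 1 with hg
  have hleft : EqOn g (fun t => 2 + -1 * t) (Icc 0 t₁) := fun t ht => by
    have h₁ : t ≤ 1 - t := by linarith [ht.2, ht₁.2]
    have h₂ : 1 - lam / 2 + s * (t - 1 / 2) ≤ 1 - t := by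
      nlinarith [hL₁ t, mul_nonneg (by linarith : 0 ≤ 1 + s) (sub_nonneg.2 ht.2)]
    simp only [hg, pickandsMinorant, max_eq_left h₂, max_eq_right h₁]
    ring
  have hmid : EqOn g (fun t => (2 - (lam + s) / 2) + s * t) (Icc t₁ t₂) := fun t ht => by
    have h₁ : 1 - t ≤ 1 - lam / 2 + s * (t - 1 / 2) := by
      nlinarith [hL₁ t, mul_nonneg (by linarith : 0 ≤ 1 + s) (sub_nonneg.2 ht.1)]
    have h₂ : t ≤ 1 - lam / 2 + s * (t - 1 / 2) := by
      nlinarith [hL₂ t, mul_nonneg (by linarith : 0 ≤ 1 - s) (sub_nonneg.2 ht.2)]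
    simp only [hg, pickandsMinorant, max_eq_right h₁, max_eq_right h₂]
    ring
  have hright : EqOn g (fun t => 1 + 1 * t) (Icc t₂ 1) := fun t ht => by
    have h₁ : 1 - t ≤ t := by linarith [ht.1, ht₂.1]
    have h₂ : 1 - lam / 2 + s * (t - 1 / 2) ≤ t := by
      nlinarith [hL₂ t, mul_nonneg (by linarith : 0 ≤ 1 - s) (sub_nonneg.2 ht.1)]
    simp only [hg, pickandsMinorant, max_eq_left (max_le h₁ h₂)]
    ring
  have hpos : ∀ t, 0 < g t := fun t => by
    have := one_half_le_pickandsMinorant lam s t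
    simp only [hg]; linarith
  have hint : ∀ a b : ℝ, IntervalIntegrable (fun t => 1 / g t ^ 2) volume a b := fun a b =>
    (continuous_one_div_sq_pickandsMinorant lam s).intervalIntegrable a b
  have h₁₂ : t₁ ≤ t₂ := ht₁.2.trans ht₂.1
  rw [← intervalIntegral.integral_add_adjacent_intervals (hint 0 t₁) (hint t₁ 1),
    ← intervalIntegral.integral_add_adjacent_intervals (hint t₁ t₂) (hint t₂ 1),
    integral_one_div_sq_of_eqOn_affine ht₁.1 hleft (hpos _) (hpos _),
    integral_one_div_sq_of_eqOn_affine h₁₂ hmid (hpos _) (hpos _),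
    integral_one_div_sq_of_eqOn_affine ht₂.2 hright (hpos _) (hpos _),
    hleft (left_mem_Icc.2 ht₁.1), hleft (right_mem_Icc.2 ht₁.1),
    hright (left_mem_Icc.2 ht₂.2), hright (right_mem_Icc.2 ht₂.2)]
  ring

lemma spearman_pickandsMinorant {lam s : ℝ} (hlam : lam ≤ 1) (hs : |s| ≤ lam) (hs₁ : |s| < 1) :
    12 * (∫ t in (0 : ℝ)..1, 1 / (pickandsMinorant lam s t + 1) ^ 2) - 3
      = 1 - 16 * ((1 - lam) / (4 - lam)) ^ 2
        - 144 * s ^ 2 * (1 - lam) ^ 2 / ((4 - lam) ^ 2 * ((4 - lam) ^ 2 - 9 * s ^ 2)) := by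
  obtain ⟨hsl, hsr⟩ := abs_le.1 hs
  obtain ⟨hs₁l, hs₁r⟩ := abs_lt.1 hs₁
  have hs_add : 0 < 1 + s := by linarith
  have hs_sub : 0 < 1 - s := by linarith
  have ht₁ : (lam + s) / (2 * (1 + s)) ∈ Icc 0 (1 / 2) :=
    ⟨div_nonneg (by linarith) (by linarith), by rw [div_le_iff₀ (by positivity)]; linarith⟩
  have ht₂ : (2 - lam - s) / (2 * (1 - s)) ∈ Icc (1 / 2) 1 :=
    ⟨by rw [le_div_iff₀ (by positivity)]; linarith, by rw [div_le_iff₀ (by positivity)]; linarith⟩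
  rw [integral_pickandsMinorant_eq_sum hs₁.le ht₁ ht₂ (by field_simp) (by field_simp; ring)]
  have hp : 0 < 4 + 3 * s - lam := by linarith
  have hq : 0 < 4 - 3 * s - lam := by linarith
  have h4 : 0 < 4 - lam := by linarith
  have e₁ : 2 - (lam + s) / (2 * (1 + s)) = (4 + 3 * s - lam) / (2 * (1 + s)) := by
    field_simp; ring
  have e₂ : 1 + (2 - lam - s) / (2 * (1 - s)) = (4 - 3 * s - lam) / (2 * (1 - s)) := by
    field_simp; ring
  have e₃ : (4 - lam) ^ 2 - 9 * s ^ 2 = (4 + 3 * s - lam) * (4 - 3 * s - lam) := by ring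
  rw [e₁, e₂, e₃]
  generalize hp_def : 4 + 3 * s - lam = p at hp ⊢
  generalize hq_def : 4 - 3 * s - lam = q at hq ⊢
  field_simp
  rw [← hp_def, ← hq_def]
  ring

lemma exists_slope_pickandsMinorant_le {lam : ℝ} {A : ℝ → ℝ}
    (hconv : ConvexOn ℝ (Icc 0 1) A) (hbd : ∀ t ∈ Icc (0 : ℝ) 1, max t (1 - t) ≤ A t ∧ A t ≤ 1)
    (hmid : A (1 / 2) = 1 - lam / 2) :
    ∃ s, |s| ≤ lam ∧ |s| < 1 ∧ ∀ t ∈ Icc (0 : ℝ) 1, pickandsMinorant lam s t ≤ A t := by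
  have hle : ∀ s, (∀ t ∈ Icc (0 : ℝ) 1, 1 - lam / 2 + s * (t - 1 / 2) ≤ A t) →
      ∀ t ∈ Icc (0 : ℝ) 1, pickandsMinorant lam s t ≤ A t := fun s hs t ht =>
    max_le ((le_max_left _ _).trans (hbd t ht).1)
      (max_le ((le_max_right _ _).trans (hbd t ht).1) (hs t ht))
  set s₀ := derivWithin A (Ioi (1 / 2)) (1 / 2)
  have hsupp : ∀ t ∈ Icc (0 : ℝ) 1, 1 - lam / 2 + s₀ * (t - 1 / 2) ≤ A t := fun t ht =>
    hmid ▸ hconv.add_rightDeriv_mul_sub_le (by norm_num) ht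
  -- the support line stays below `A 0 ≤ 1` and `A 1 ≤ 1`
  have hs₀ : |s₀| ≤ lam := abs_le.2
    ⟨by linarith [hsupp 0 (by norm_num), (hbd 0 (by norm_num)).2],
      by linarith [hsupp 1 (by norm_num), (hbd 1 (by norm_num)).2]⟩
  by_cases hs₀₁ : |s₀| < 1
  · exact ⟨s₀, hs₀, hs₀₁, hle s₀ hsupp⟩
  · -- then `lam = 1`, and the horizontal line at height `1 / 2` supports `A`
    refine ⟨0, by simpa using (abs_nonneg s₀).trans hs₀, by simp, hle 0 fun t ht => ?_⟩
    linarith [(hbd t ht).1, le_max_left t (1 - t), le_max_right t (1 - t)]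

theorem stmt_8 (lam : ℝ) (hlam : lam ∈ Set.Icc (0:ℝ) 1) (A : ℝ → ℝ)
    (hconv : ConvexOn ℝ (Set.Icc (0:ℝ) 1) A)
    (hbd : ∀ t ∈ Set.Icc (0:ℝ) 1, max t (1 - t) ≤ A t ∧ A t ≤ 1)
    (hmid : A (1 / 2) = 1 - lam / 2) :
    12 * (∫ t in (0:ℝ)..1, 1 / (A t + 1) ^ 2) - 3
      ≤ 1 - 16 * ((1 - lam) / (4 - lam)) ^ 2 ∧
    12 * (∫ t in (0:ℝ)..1, 1 / (max t (max (1 - t) (1 - lam / 2)) + 1) ^ 2) - 3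
      = 1 - 16 * ((1 - lam) / (4 - lam)) ^ 2 := by
  obtain ⟨hlam₀, hlam₁⟩ := hlam
  obtain ⟨s, hs, hs₁, hle⟩ := exists_slope_pickandsMinorant_le hconv hbd hmid
  have hmono : ∫ t in (0 : ℝ)..1, 1 / (A t + 1) ^ 2
      ≤ ∫ t in (0 : ℝ)..1, 1 / (pickandsMinorant lam s t + 1) ^ 2 := by
    refine intervalIntegral.integral_mono_on_of_nonneg zero_le_one
      ((continuous_one_div_sq_pickandsMinorant lam s).intervalIntegrable _ _)
      (fun t _ => by positivity) fun t ht => ?_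
    have := one_half_le_pickandsMinorant lam s t
    gcongr
    exact hle t ht
  have hgap : 0 ≤ 144 * s ^ 2 * (1 - lam) ^ 2 / ((4 - lam) ^ 2 * ((4 - lam) ^ 2 - 9 * s ^ 2)) := by
    have : 9 * s ^ 2 ≤ (4 - lam) ^ 2 := by nlinarith [sq_abs s, abs_nonneg s]
    exact div_nonneg (by positivity) (mul_nonneg (sq_nonneg _) (sub_nonneg.2 this))
  refine ⟨?_, ?_⟩
  · linarith [spearman_pickandsMinorant hlam₁ hs hs₁]
  · simpa [pickandsMinorant] using
      spearman_pickandsMinorant (s := 0) hlam₁ (by simpa using hlam₀) (by simp)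
end

section
/- For α, β ∈ [0,1] with (α,β) ≠ (0,0) and A(t) = 1 − min{βt, α(1−t)} on [0,1] (the Pickands dependence function of the Marshall–Olkin copula with parameters α, β), one has 12∫₀¹ dt/(A(t)+1)² − 3 = 3αβ/(2α − αβ + 2β). -/
open MeasureTheory Filter Set Real

noncomputable section

/-!
On `[0, 1]` the Marshall–Olkin dependence function `A` is affine on either side of its kink
`c = α / (α + β)`, where both pieces give `A c + 1 = (2α - αβ + 2β) / (α + β)`. The integral of
`1 / (a + b t) ^ 2` over `[p, q]` is `(q - p) / ((a + b p) (a + b q))`, so the two pieces contribute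
`α / (2 (2α - αβ + 2β))` and `β / (2 (2α - αβ + 2β))`.
-/

-- The antiderivative `(t - p) / ((a + b p) (a + b t))` needs no `b ≠ 0`.
theorem integral_one_div_affine_sq_s13 (a b p q : ℝ) (h : ∀ t ∈ uIcc p q, a + b * t ≠ 0) :
    ∫ t in p..q, 1 / (a + b * t) ^ 2 = (q - p) / ((a + b * p) * (a + b * q)) := by
  have hp : a + b * p ≠ 0 := h p left_mem_uIcc
  have hderiv : ∀ t ∈ uIcc p q, HasDerivAt (fun t => (t - p) / ((a + b * p) * (a + b * t)))
      (1 / (a + b * t) ^ 2) t := by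
    intro t ht
    have hden : HasDerivAt (fun t => (a + b * p) * (a + b * t)) ((a + b * p) * b) t := by
      simpa using (((hasDerivAt_id t).const_mul b).const_add a).const_mul (a + b * p)
    have hnum : HasDerivAt (fun t => t - p) 1 t := (hasDerivAt_id' t).sub_const p
    refine (hnum.div hden (mul_ne_zero hp (h t ht))).congr_deriv ?_
    have := h t ht
    field_simp
    ring
  have hcont : ContinuousOn (fun t => 1 / (a + b * t) ^ 2) (uIcc p q) :=
    continuousOn_const.div (by fun_prop) fun t ht => pow_ne_zero 2 (h t ht)
  rw [intervalIntegral.integral_eq_sub_of_hasDerivAt hderiv hcont.intervalIntegrable]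
  simp

def marshallOlkinPickands (α β t : ℝ) : ℝ := 1 - min (β * t) (α * (1 - t))

theorem marshallOlkinPickands_of_le {α β t : ℝ} (h : (α + β) * t ≤ α) :
    marshallOlkinPickands α β t = 1 - β * t := by
  rw [marshallOlkinPickands, min_eq_left (by linarith)]

theorem marshallOlkinPickands_of_ge {α β t : ℝ} (h : α ≤ (α + β) * t) :
    marshallOlkinPickands α β t = 1 - α * (1 - t) := by
  rw [marshallOlkinPickands, min_eq_right (by linarith)]

theorem half_le_marshallOlkinPickands {α β t : ℝ} (hα : α ≤ 1) (hβ : β ≤ 1) (ht : t ∈ Icc 0 1) :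
    1 / 2 ≤ marshallOlkinPickands α β t := by
  have hβt : β * t ≤ t := mul_le_of_le_one_left ht.1 hβ
  have hαt : α * (1 - t) ≤ 1 - t := mul_le_of_le_one_left (by linarith [ht.2]) hα
  have := min_le_left (β * t) (α * (1 - t))
  have := min_le_right (β * t) (α * (1 - t))
  rw [marshallOlkinPickands]
  linarith

theorem marshallOlkin_denom_pos {α β : ℝ} (hα : α ∈ Icc 0 1) (hαβ : 0 < α + β) :
    0 < 2 * α - α * β + 2 * β := by
  nlinarith [hα.1, hα.2]

theorem integral_marshallOlkinPickands {α β : ℝ} (hα : α ∈ Icc 0 1) (hβ : β ∈ Icc 0 1)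
    (hαβ : 0 < α + β) :
    ∫ t in (0:ℝ)..1, 1 / (marshallOlkinPickands α β t + 1) ^ 2
      = (α + β) / (2 * (2 * α - α * β + 2 * β)) := by
  obtain ⟨hα0, hα1⟩ := hα
  obtain ⟨hβ0, hβ1⟩ := hβ
  set c := α / (α + β) with hc
  have hαβc : (α + β) * c = α := mul_div_cancel₀ α hαβ.ne'
  have hc0 : 0 ≤ c := div_nonneg hα0 hαβ.le
  have hc1 : c ≤ 1 := (div_le_one hαβ).2 (by linarith)
  have hcont : ContinuousOn (fun t => 1 / (marshallOlkinPickands α β t + 1) ^ 2) (Icc 0 1) := by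
    refine continuousOn_const.div
      (Continuous.continuousOn (by unfold marshallOlkinPickands; fun_prop))
      fun t ht => pow_ne_zero 2 ?_
    linarith [half_le_marshallOlkinPickands hα1 hβ1 ht]
  have hleft : ∫ t in (0:ℝ)..c, 1 / (marshallOlkinPickands α β t + 1) ^ 2
      = ∫ t in (0:ℝ)..c, 1 / (2 + -β * t) ^ 2 := by
    refine intervalIntegral.integral_congr fun t ht => ?_
    rw [uIcc_of_le hc0] at ht
    have : (α + β) * t ≤ α := (mul_le_mul_of_nonneg_left ht.2 hαβ.le).trans_eq hαβc
    simp only [marshallOlkinPickands_of_le this]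
    ring_nf
  have hright : ∫ t in c..1, 1 / (marshallOlkinPickands α β t + 1) ^ 2
      = ∫ t in c..1, 1 / ((2 - α) + α * t) ^ 2 := by
    refine intervalIntegral.integral_congr fun t ht => ?_
    rw [uIcc_of_le hc1] at ht
    have : α ≤ (α + β) * t := hαβc.symm.trans_le (mul_le_mul_of_nonneg_left ht.1 hαβ.le)
    simp only [marshallOlkinPickands_of_ge this]
    ring_nf
  rw [← intervalIntegral.integral_add_adjacent_intervals
      ((hcont.mono (uIcc_subset_Icc ⟨le_rfl, zero_le_one⟩ ⟨hc0, hc1⟩)).intervalIntegrable)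
      ((hcont.mono (uIcc_subset_Icc ⟨hc0, hc1⟩ ⟨zero_le_one, le_rfl⟩)).intervalIntegrable),
    hleft, hright, integral_one_div_affine_sq_s13, integral_one_div_affine_sq_s13]
  · have hD := marshallOlkin_denom_pos ⟨hα0, hα1⟩ hαβ
    have hkink : 2 + -β * c = (2 * α - α * β + 2 * β) / (α + β) := by
      rw [hc]; field_simp; ring
    have hkink' : 2 - α + α * c = (2 * α - α * β + 2 * β) / (α + β) := by
      rw [hc]; field_simp; ring
    rw [hkink, hkink', hc]
    field_simp
    ring
  · intro t ht
    rw [uIcc_of_le hc1] at ht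
    nlinarith [ht.1, ht.2]
  · intro t ht
    rw [uIcc_of_le hc0] at ht
    nlinarith [ht.1, ht.2]

theorem stmt_13_general (α β : ℝ) (hα : α ∈ Set.Icc (0:ℝ) 1) (hβ : β ∈ Set.Icc (0:ℝ) 1) :
    12 * (∫ t in (0:ℝ)..1, 1 / ((1 - min (β * t) (α * (1 - t))) + 1) ^ 2) - 3
      = 3 * α * β / (2 * α - α * β + 2 * β) := by
  rcases (add_nonneg hα.1 hβ.1).eq_or_lt with hαβ | hαβ
  · obtain ⟨rfl, rfl⟩ : α = 0 ∧ β = 0 := ⟨by linarith [hα.1, hβ.1], by linarith [hα.1, hβ.1]⟩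
    norm_num
  · change 12 * (∫ t in (0:ℝ)..1, 1 / (marshallOlkinPickands α β t + 1) ^ 2) - 3 = _
    have hD := (marshallOlkin_denom_pos hα hαβ).ne'
    rw [integral_marshallOlkinPickands hα hβ hαβ, div_mul_eq_div_div_swap]
    linear_combination 3 * mul_inv_cancel₀ hD

theorem stmt_13 (α β : ℝ) (hα : α ∈ Set.Icc (0:ℝ) 1) (hβ : β ∈ Set.Icc (0:ℝ) 1)
    (hne : (α, β) ≠ (0, 0)) :
    12 * (∫ t in (0:ℝ)..1, 1 / ((1 - min (β * t) (α * (1 - t))) + 1) ^ 2) - 3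
      = 3 * α * β / (2 * α - α * β + 2 * β) :=
  stmt_13_general α β hα hβ
end
end

section
/- Let C be a bivariate extreme value copula with upper tail dependence coefficient λ ∈ [0,1]. Then Blomqvist's coefficient β_C = 4·C(1/2, 1/2) − 1 satisfies β_C = 2^λ − 1, and equivalently λ = log₂(1 + β_C). -/
open MeasureTheory Filter Set Real

noncomputable section

theorem stmt_16 (C : ℝ → ℝ → ℝ) (lam : ℝ) (hlam : lam ∈ Set.Icc (0:ℝ) 1)
    (hC : IsExtremeValueCopula C) (hU : HasUpperTailDep C lam) :
    4 * C (1 / 2) (1 / 2) - 1 = 2 ^ lam - 1 ∧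
    lam = Real.logb 2 (1 + (4 * C (1 / 2) (1 / 2) - 1)) := by
  obtain ⟨⟨hbd, hinc⟩, hmax⟩ := hC
  set c := C (1/2) (1/2) with hc
  -- c ≥ 0
  have hc0 : 0 ≤ c := by
    have := hinc 0 (1/2) 0 (1/2) le_rfl (by norm_num) (by norm_num) le_rfl (by norm_num) (by norm_num)
    have h1 := (hbd (1/2) (by norm_num) (by norm_num)).1
    have h2 := (hbd (1/2) (by norm_num) (by norm_num)).2.1
    have h3 := (hbd 0 le_rfl zero_le_one).1
    linarith
  -- diagonal formula
  have hdiag : ∀ t : ℝ, 0 < t → t < 1 → C t t = c ^ (Real.logb (1/2) t) := by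
    intro t ht0 ht1
    have hs : 0 < Real.logb (1/2) t := Real.logb_pos_of_base_lt_one (by norm_num) (by norm_num) ht0 ht1
    have key := hmax (Real.logb (1/2) t) hs (1/2) (1/2) (by norm_num) (by norm_num) (by norm_num) (by norm_num)
    rwa [Real.rpow_logb (by norm_num) (by norm_num) ht0] at key
  -- c ≠ 0
  have hcpos : 0 < c := by
    rcases hc0.lt_or_eq with h | h
    · exact h
    · exfalso
      -- C t t = 0 near 1, so the ratio blows up
      have hev : ∀ᶠ t in nhdsWithin (1:ℝ) (Set.Iio 1),
          (1 - C t t) / (1 - t) = (1 - t)⁻¹ := by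
        filter_upwards [Ioo_mem_nhdsLT_of_mem (by norm_num : (1:ℝ) ∈ Set.Ioc 0 1)] with t ht
        have hs : 0 < Real.logb (1/2) t :=
          Real.logb_pos_of_base_lt_one (by norm_num) (by norm_num) ht.1 ht.2
        rw [hdiag t ht.1 ht.2, ← h, Real.zero_rpow hs.ne']
        rw [sub_zero, one_div]
      have htop : Tendsto (fun t : ℝ => (1 - t)⁻¹) (nhdsWithin 1 (Set.Iio 1)) atTop := by
        have h1 : Tendsto (fun t : ℝ => 1 - t) (nhdsWithin 1 (Set.Iio 1))
            (nhdsWithin 0 (Set.Ioi 0)) := by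
          rw [tendsto_nhdsWithin_iff]
          refine ⟨?_, ?_⟩
          · have h2 : Tendsto (fun t : ℝ => 1 - t) (nhds 1) (nhds (1 - 1)) :=
              (continuous_const.sub continuous_id).tendsto 1
            simpa using h2.mono_left nhdsWithin_le_nhds
          · filter_upwards [self_mem_nhdsWithin] with t ht
            exact Set.mem_Ioi.mpr (sub_pos.mpr (Set.mem_Iio.mp ht))
        exact tendsto_inv_nhdsGT_zero.comp h1
      have h3 : Tendsto (fun t : ℝ => (1 - t)⁻¹) (nhdsWithin 1 (Set.Iio 1)) (nhds (2 - lam)) :=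
        Filter.Tendsto.congr' hev hU
      exact not_tendsto_nhds_of_tendsto_atTop htop (2 - lam) h3
  set θ := Real.logb (1/2) c with hθ
  have hcθ : c = (1/2 : ℝ) ^ θ := (Real.rpow_logb (by norm_num) (by norm_num) hcpos).symm
  -- C t t = t ^ θ for t ∈ (0,1)
  have hdiag' : ∀ t : ℝ, 0 < t → t < 1 → C t t = t ^ θ := by
    intro t ht0 ht1
    rw [hdiag t ht0 ht1, hcθ, ← Real.rpow_mul (by norm_num : (0:ℝ) ≤ 1/2),
      mul_comm, Real.rpow_mul (by norm_num : (0:ℝ) ≤ 1/2),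
      Real.rpow_logb (by norm_num) (by norm_num) ht0]
  -- the limit is θ
  have hslope : Tendsto (fun t : ℝ => (1 - C t t) / (1 - t)) (nhdsWithin 1 (Set.Iio 1)) (nhds θ) := by
    have hd : HasDerivAt (fun x : ℝ => x ^ θ) (θ * (1:ℝ) ^ (θ - 1)) 1 :=
      Real.hasDerivAt_rpow_const (Or.inl one_ne_zero)
    have hd' : HasDerivAt (fun x : ℝ => x ^ θ) θ 1 := by simpa using hd
    have := hasDerivAt_iff_tendsto_slope.mp hd'
    have h2 : Tendsto (slope (fun x : ℝ => x ^ θ) 1) (nhdsWithin 1 (Set.Iio 1)) (nhds θ) :=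
      this.mono_left (nhdsWithin_mono _ (fun x hx => by
        simp only [Set.mem_compl_iff, Set.mem_singleton_iff]
        exact ne_of_lt hx))
    apply h2.congr'
    filter_upwards [Ioo_mem_nhdsLT_of_mem (by norm_num : (1:ℝ) ∈ Set.Ioc 0 1)] with t ht
    rw [slope_def_field, hdiag' t ht.1 ht.2]
    rw [Real.one_rpow]
    rw [div_eq_div_iff (by linarith [ht.2] : t - 1 ≠ 0) (by linarith [ht.2] : (1:ℝ) - t ≠ 0)]
    ring
  have hθeq : θ = 2 - lam := tendsto_nhds_unique hslope hU
  have hkey : 4 * c = 2 ^ lam := by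
    rw [hcθ, hθeq]
    rw [show ((1:ℝ)/2) = 2⁻¹ by norm_num, Real.inv_rpow (by norm_num), ← Real.rpow_neg (by norm_num),
      neg_sub, Real.rpow_sub (by norm_num)]
    norm_num
    ring
  constructor
  · linarith
  · rw [show 1 + (4 * c - 1) = 4 * c by ring, hkey, Real.logb_rpow (by norm_num) (by norm_num)]
end
end
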